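/- arXiv:1512.08747 — 3 statements merged into one kernel-verified Lean document; each statement's English description precedes it below -/
import Mathlib

section
/- Sylvester's determinant identity: Let R be a commutative ring, n ≥ 0, and A an (n+2)×(n+2) matrix over R. For any row indices i < j and column indices k < ℓ in Fin (n+2), one has det(A) · det(A_{i,j|k,ℓ}) = det(A_{i|k}) · det(A_{j|ℓ}) − det(A_{i|ℓ}) · det(A_{j|k}). -/
/-!
Let `u`, `v` be the columns `i`, `j` of `adj A`, and let `N` be the identity matrix with its
columns `k`, `l` replaced by `u`, `v`. Since `A * adj A = det A • 1`, the product `A * N` is `A`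
with its columns `k`, `l` replaced by `det A • eᵢ` and `det A • eⱼ`. Taking determinants, and
expanding the right-hand side along these two columns (Laplace), gives
`det A * (u k * v l - u l * v k) = det A ^ 2 * ± det A_{i,j|k,l}`, while the cofactor formula turns
`u k * v l - u l * v k` into `± (det A_{i|k} * det A_{j|l} - det A_{i|l} * det A_{j|k})`.
One factor `det A` is cancelled on the generic matrix, whose determinant is a nonzero polynomial.
-/

open Matrix

theorem Fin.succAbove_comp_succAbove_pred {n : ℕ} {i j : Fin (n + 2)} (h : i < j) :
    i.succAbove ∘ (j.pred (Fin.ne_zero_of_lt h)).succAbove =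
      j.succAbove ∘ (i.castPred (Fin.ne_last_of_lt h)).succAbove := by
  funext t
  have := Fin.succAbove_succAbove_succAbove_predAbove i (j.pred (Fin.ne_zero_of_lt h)) t
  rw [Fin.succAbove_pred_of_lt _ _ h, Fin.predAbove_pred_of_lt _ _ h] at this
  exact this.symm

theorem Pi.single_comp_of_injective {α β M : Type*} [DecidableEq α] [DecidableEq β] [Zero M]
    {f : α → β} (hf : f.Injective) {a : α} {b : β} (h : f a = b) (x : M) :
    Pi.single b x ∘ f = Pi.single a x := by
  subst h
  ext r
  simp [Pi.single_apply, hf.eq_iff]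

namespace Matrix

theorem submatrix_updateCol_of_injective {l m n o α : Type*} [DecidableEq n] [DecidableEq o]
    (A : Matrix m n α) (f : l → m) {g : o → n} (hg : g.Injective) {c : o} {c' : n}
    (hc : g c = c') (v : m → α) :
    (A.updateCol c' v).submatrix f g = (A.submatrix f g).updateCol c (v ∘ f) := by
  subst hc
  ext r e
  simp [updateCol_apply, hg.eq_iff]

variable {R : Type*} [CommRing R]

theorem det_updateCol_single_one {n : ℕ} (A : Matrix (Fin (n + 1)) (Fin (n + 1)) R)
    (i j : Fin (n + 1)) :
    (A.updateCol j (Pi.single i 1)).det =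
      (-1) ^ (i + j : ℕ) * (A.submatrix i.succAbove j.succAbove).det := by
  rw [det_succ_column _ j, Fintype.sum_eq_single i fun r hr => by simp [hr],
    submatrix_updateCol_succAbove]
  simp

theorem det_updateCol_single_updateCol_single {n : ℕ}
    (A : Matrix (Fin (n + 2)) (Fin (n + 2)) R) {i j k l : Fin (n + 2)} (hij : i < j)
    (hkl : k < l) :
    ((A.updateCol k (Pi.single i 1)).updateCol l (Pi.single j 1)).det =
      (-1) ^ (i + k + (j + l) : ℕ) * (A.submatrix
        (i.succAbove ∘ (j.pred (Fin.ne_zero_of_lt hij)).succAbove)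
        (k.succAbove ∘ (l.pred (Fin.ne_zero_of_lt hkl)).succAbove)).det := by
  rw [det_updateCol_single_one, submatrix_updateCol_of_injective _ _ Fin.succAbove_right_injective
    (Fin.succAbove_castPred_of_lt _ _ hkl), Pi.single_comp_of_injective
    Fin.succAbove_right_injective (Fin.succAbove_castPred_of_lt _ _ hij), det_updateCol_single_one,
    submatrix_submatrix, Fin.succAbove_comp_succAbove_pred hij,
    Fin.succAbove_comp_succAbove_pred hkl, Fin.coe_castPred, Fin.coe_castPred, pow_add]
  ring

theorem det_one_updateCol_updateCol {ι : Type*} [Fintype ι] [DecidableEq ι] {k l : ι}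
    (hkl : k ≠ l) (u v : ι → R) :
    (((1 : Matrix ι ι R).updateCol k u).updateCol l v).det = u k * v l - u l * v k := by
  -- a rank-two perturbation of `1`, so Weinstein–Aronszajn reduces it to a `2 × 2` determinant
  let U : Matrix ι (Fin 2) R :=
    of fun r => ![u r - (Pi.single k 1 : ι → R) r, v r - (Pi.single l 1 : ι → R) r]
  let V : Matrix (Fin 2) ι R := of ![Pi.single k 1, Pi.single l 1]
  have hUV : ((1 : Matrix ι ι R).updateCol k u).updateCol l v = 1 + U * V := by
    ext r c
    by_cases hcl : c = l <;> by_cases hck : c = k <;>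
      simp_all [U, V, mul_apply, Fin.sum_univ_two, Pi.single_apply, one_apply]
  rw [hUV, det_one_add_mul_comm, det_fin_two]
  simp [U, V, hkl, hkl.symm]
  ring

theorem det_mul_adjugate_minor_two {ι : Type*} [Fintype ι] [DecidableEq ι] (A : Matrix ι ι R)
    (i j : ι) {k l : ι} (hkl : k ≠ l) :
    A.det * (A.adjugate k i * A.adjugate l j - A.adjugate l i * A.adjugate k j) =
      A.det * (A.det * ((A.updateCol k (Pi.single i 1)).updateCol l (Pi.single j 1)).det) := by
  have hcol : ∀ r, A *ᵥ A.adjugate.col r = A.det • Pi.single r 1 := fun r => by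
    rw [← mulVec_single_one, mulVec_mulVec, mul_adjugate, smul_mulVec, one_mulVec]
  calc A.det * (A.adjugate k i * A.adjugate l j - A.adjugate l i * A.adjugate k j)
      = (A * ((1 : Matrix ι ι R).updateCol k (A.adjugate.col i)).updateCol l
          (A.adjugate.col j)).det := by
        rw [det_mul, det_one_updateCol_updateCol hkl]; rfl
    _ = ((A.updateCol k (A.det • Pi.single i 1)).updateCol l (A.det • Pi.single j 1)).det := by
        rw [mul_updateCol, mul_updateCol, mul_one, hcol, hcol]
    _ = A.det * (A.det * ((A.updateCol k (Pi.single i 1)).updateCol l (Pi.single j 1)).det) := by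
        rw [det_updateCol_smul, updateCol_comm _ hkl, det_updateCol_smul,
          updateCol_comm _ hkl.symm]

theorem adjugate_minor_two {ι : Type*} [Fintype ι] [DecidableEq ι] (A : Matrix ι ι R)
    (i j : ι) {k l : ι} (hkl : k ≠ l) :
    A.adjugate k i * A.adjugate l j - A.adjugate l i * A.adjugate k j =
      A.det * ((A.updateCol k (Pi.single i 1)).updateCol l (Pi.single j 1)).det := by
  let X := mvPolynomialX ι ι ℤ
  have hX := mul_left_cancel₀ (det_mvPolynomialX_ne_zero ι ℤ)
    (det_mul_adjugate_minor_two X i j hkl)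
  let f := MvPolynomial.aeval (R := ℤ) fun p : ι × ι => A p.1 p.2
  have hA : f.mapMatrix X = A := mvPolynomialX_mapMatrix_aeval ℤ A
  have hadj : ∀ a b, f (X.adjugate a b) = A.adjugate a b := fun a b => by
    rw [← hA, ← AlgHom.map_adjugate]; rfl
  have hupd : f.mapMatrix ((X.updateCol k (Pi.single i 1)).updateCol l (Pi.single j 1)) =
      (A.updateCol k (Pi.single i 1)).updateCol l (Pi.single j 1) := by
    rw [← hA]
    ext r c
    simp [updateCol_apply, Pi.single_apply, apply_ite f]
  simpa only [map_sub, map_mul, hadj, AlgHom.map_det, hupd, hA] using congrArg f hX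

end Matrix

/-- Sylvester's determinant identity: for an `(n+2) × (n+2)` matrix `A` over a
commutative ring, row indices `i < j` and column indices `k < ℓ`,
`det A * det A_{i,j|k,ℓ} = det A_{i|k} * det A_{j|ℓ} - det A_{i|ℓ} * det A_{j|k}`,
where `A_{i|k}` deletes row `i` and column `k`, and `A_{i,j|k,ℓ}` deletes rows
`i, j` and columns `k, ℓ` (realized by composing the two deletions). -/
theorem sylvester_det_identity {R : Type*} [CommRing R] (n : ℕ)
    (A : Matrix (Fin (n + 2)) (Fin (n + 2)) R)
    (i j k l : Fin (n + 2)) (hij : i < j) (hkl : k < l) :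
    A.det *
      (A.submatrix
        (i.succAbove ∘ (⟨j.val - 1, by have := j.isLt; omega⟩ : Fin (n + 1)).succAbove)
        (k.succAbove ∘ (⟨l.val - 1, by have := l.isLt; omega⟩ : Fin (n + 1)).succAbove)).det
    = (A.submatrix i.succAbove k.succAbove).det * (A.submatrix j.succAbove l.succAbove).det
      - (A.submatrix i.succAbove l.succAbove).det * (A.submatrix j.succAbove k.succAbove).det := by
  rw [show (⟨j.val - 1, _⟩ : Fin (n + 1)) = j.pred (Fin.ne_zero_of_lt hij) from rfl,
    show (⟨l.val - 1, _⟩ : Fin (n + 1)) = l.pred (Fin.ne_zero_of_lt hkl) from rfl]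
  have h := adjugate_minor_two A i j hkl.ne
  rw [det_updateCol_single_updateCol_single A hij hkl] at h
  simp only [adjugate_fin_succ_eq_det_submatrix] at h
  have hsign : IsUnit ((-1 : R) ^ (i + k + (j + l) : ℕ)) := isUnit_one.neg.pow _
  exact (hsign.mul_left_cancel (by linear_combination h)).symm
end

section
/- Let R be a commutative ring, n ≥ 0, and A an (n+2)×(n+2) matrix over R. Deleting the first two rows and first two columns, one has det(A) · det(A_{0,1|0,1}) = det(A_{0|0}) · det(A_{1|1}) − det(A_{0|1}) · det(A_{1|0}), where indices are zero-based (rows/columns 0 and 1 are the first two). -/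
open Matrix

private lemma sylv_aux_mul {α : Type*} [CommRing α] (n : ℕ)
    (A : Matrix (Fin (n + 2)) (Fin (n + 2)) α) :
    A.det * (A.adjugate 0 0 * A.adjugate 1 1 - A.adjugate 0 1 * A.adjugate 1 0)
    = A.det * (A.det *
      (A.submatrix (fun p : Fin n => p.succ.succ) (fun q : Fin n => q.succ.succ)).det) := by
  let e : Fin 2 ⊕ Fin n ≃ Fin (n + 2) := finSumFinEquiv.trans (finCongr (by omega))
  have he0 : e (Sum.inl 0) = 0 := by
    ext; simp [e, finSumFinEquiv]
  have he1 : e (Sum.inl 1) = 1 := by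
    ext; simp [e, finSumFinEquiv]
  have her : ∀ p : Fin n, e (Sum.inr p) = p.succ.succ := by
    intro p; ext; simp [e, finSumFinEquiv]
  set B := A.submatrix e e with hBdef
  set P := (adjugate B).toBlocks₁₁ with hP
  set Q := (adjugate B).toBlocks₂₁ with hQ
  have hadj : fromBlocks (B.toBlocks₁₁ * P + B.toBlocks₁₂ * Q)
      (B.toBlocks₁₁ * (adjugate B).toBlocks₁₂ + B.toBlocks₁₂ * (adjugate B).toBlocks₂₂)
      (B.toBlocks₂₁ * P + B.toBlocks₂₂ * Q)
      (B.toBlocks₂₁ * (adjugate B).toBlocks₁₂ + B.toBlocks₂₂ * (adjugate B).toBlocks₂₂)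
      = fromBlocks (B.det • 1) 0 0 (B.det • 1) := by
    rw [hP, hQ, ← fromBlocks_multiply, fromBlocks_toBlocks, fromBlocks_toBlocks, mul_adjugate,
      ← fromBlocks_one, fromBlocks_smul]
    simp
  have h1 : B.toBlocks₁₁ * P + B.toBlocks₁₂ * Q = B.det • 1 := by
    have := congrArg Matrix.toBlocks₁₁ hadj
    simpa using this
  have h2 : B.toBlocks₂₁ * P + B.toBlocks₂₂ * Q = 0 := by
    have := congrArg Matrix.toBlocks₂₁ hadj
    simpa using this
  have hmul : B * fromBlocks P 0 Q 1
      = fromBlocks (B.det • 1) B.toBlocks₁₂ 0 B.toBlocks₂₂ := by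
    conv_lhs => rw [← fromBlocks_toBlocks B]
    rw [fromBlocks_multiply, h1, h2]
    simp
  have hdet := congrArg Matrix.det hmul
  rw [det_mul, det_fromBlocks_zero₁₂, det_fromBlocks_zero₂₁, det_one, mul_one, det_smul,
    det_one, mul_one, Fintype.card_fin] at hdet
  have hPdet : P.det = A.adjugate 0 0 * A.adjugate 1 1 - A.adjugate 0 1 * A.adjugate 1 0 := by
    rw [det_fin_two]
    have hPe : ∀ i j, P i j = A.adjugate (e (Sum.inl i)) (e (Sum.inl j)) := by
      intro i j
      simp [hP, Matrix.toBlocks₁₁, hBdef, adjugate_submatrix_equiv_self]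
    rw [hPe 0 0, hPe 1 1, hPe 0 1, hPe 1 0, he0, he1]
  have hB22 : B.toBlocks₂₂
      = A.submatrix (fun p : Fin n => p.succ.succ) (fun q : Fin n => q.succ.succ) := by
    ext i j
    simp [Matrix.toBlocks₂₂, hBdef, her]
  have hBA : B.det = A.det := det_submatrix_equiv_self e A
  rw [hPdet, hB22, hBA] at hdet
  rw [hdet]
  ring
private lemma sylv_aux {R : Type*} [CommRing R] (n : ℕ)
    (A : Matrix (Fin (n + 2)) (Fin (n + 2)) R) :
    A.adjugate 0 0 * A.adjugate 1 1 - A.adjugate 0 1 * A.adjugate 1 0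
    = A.det *
      (A.submatrix (fun p : Fin n => p.succ.succ) (fun q : Fin n => q.succ.succ)).det := by
  let A' := mvPolynomialX (Fin (n + 2)) (Fin (n + 2)) ℤ
  have key : A'.adjugate 0 0 * A'.adjugate 1 1 - A'.adjugate 0 1 * A'.adjugate 1 0
      = A'.det *
        (A'.submatrix (fun p : Fin n => p.succ.succ) (fun q : Fin n => q.succ.succ)).det :=
    mul_left_cancel₀ (det_mvPolynomialX_ne_zero _ ℤ) (sylv_aux_mul n A')
  let φ : MvPolynomial (Fin (n + 2) × Fin (n + 2)) ℤ →ₐ[ℤ] R :=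
    MvPolynomial.aeval fun p : Fin (n + 2) × Fin (n + 2) => A p.1 p.2
  have hφA : φ.mapMatrix A' = A := mvPolynomialX_mapMatrix_aeval ℤ A
  have := congrArg φ key
  rw [map_sub, _root_.map_mul, _root_.map_mul, _root_.map_mul] at this
  have hφA' : A'.map ⇑φ = A := by rw [← AlgHom.mapMatrix_apply]; exact hφA
  have hadj : ∀ i j, φ (A'.adjugate i j) = A.adjugate i j := by
    intro i j
    have h := congrArg (fun M => M i j) (AlgHom.map_adjugate φ A')
    simp only [AlgHom.mapMatrix_apply, Matrix.map_apply] at h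
    rw [h, hφA']
  have hdet : φ A'.det = A.det := by
    rw [AlgHom.map_det, AlgHom.mapMatrix_apply, hφA']
  have hdet2 : φ (A'.submatrix (fun p : Fin n => p.succ.succ)
      (fun q : Fin n => q.succ.succ)).det
      = (A.submatrix (fun p : Fin n => p.succ.succ) (fun q : Fin n => q.succ.succ)).det := by
    rw [AlgHom.map_det, AlgHom.mapMatrix_apply, ← submatrix_map, hφA']
  rwa [hadj, hadj, hadj, hadj, hdet, hdet2] at this

/-- Sylvester's identity for the first two rows and columns:
`det A * det A_{0,1|0,1} = det A_{0|0} * det A_{1|1} - det A_{0|1} * det A_{1|0}`. -/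
theorem sylvester_det_identity_first_two {R : Type*} [CommRing R] (n : ℕ)
    (A : Matrix (Fin (n + 2)) (Fin (n + 2)) R) :
    A.det * (A.submatrix (fun p : Fin n => p.succ.succ) (fun q : Fin n => q.succ.succ)).det
    = (A.submatrix (0 : Fin (n + 2)).succAbove (0 : Fin (n + 2)).succAbove).det *
        (A.submatrix (1 : Fin (n + 2)).succAbove (1 : Fin (n + 2)).succAbove).det
      - (A.submatrix (0 : Fin (n + 2)).succAbove (1 : Fin (n + 2)).succAbove).det *
        (A.submatrix (1 : Fin (n + 2)).succAbove (0 : Fin (n + 2)).succAbove).det := by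
  have h := (sylv_aux n A).symm
  rw [adjugate_fin_succ_eq_det_submatrix, adjugate_fin_succ_eq_det_submatrix,
    adjugate_fin_succ_eq_det_submatrix, adjugate_fin_succ_eq_det_submatrix] at h
  simp only [Fin.val_zero, Fin.val_one, pow_zero, pow_one, pow_succ] at h
  rw [h]
  ring
end

section
/- Second-derivative consequence of Sylvester's identity (coefficient of a_{i,n+1}·a_{j,n+1} in the inductive step): Let R be a commutative ring, n ≥ 0, A an (n+2)×(n+2) matrix over R, v : Fin (n+2) → R, and r, s distinct indices in Fin (n+2) with 2 ≤ r and 2 ≤ s. Set B = A.updateRow r v and C = A.updateRow s v. Then det(B) · det(C_{0,1|0,1}) + det(C) · det(B_{0,1|0,1}) = det(B_{0|0}) · det(C_{1|1}) + det(C_{0|0}) · det(B_{1|1}) − det(B_{0|1}) · det(C_{1|0}) − det(C_{0|1}) · det(B_{1|0}). -/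
/-!
Desnanot–Jacobi: multiplying `M` on the left by the identity matrix with its first two rows
replaced by those of `adjugate M` produces `M` with its first two rows replaced by `det M • eᵢ`,
so `det M * (det M * det M_{01|01}) = det M * (2 × 2 minor of the adjugate)`, and the adjugate
entries are signed first minors. The factor `det M` is cancelled for the generic matrix, whose
determinant is not a zero divisor, and the identity then specialises to every `M`.

The theorem is the polarisation of this identity in the rows `r` and `s`. Every minor occurring
in it keeps both rows, so it is additive in each of them and vanishes when both equal `v`.
Applying Desnanot–Jacobi to `A`, to `A` with row `r` (resp. `s`) replaced by `A r + v` (resp.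
`A s + v`), and to `A` with both replacements, the alternating sum of the four identities leaves
exactly the mixed terms of `B` and `C`.
-/

open Matrix

namespace Matrix

variable {R : Type*} [CommRing R]

theorem submatrix_updateRow_of_injective {l m n o α : Type*} [DecidableEq l] [DecidableEq m]
    (M : Matrix m n α) {ρ : l → m} (hρ : Function.Injective ρ) (κ : o → n) (i : l)
    (x : n → α) :
    (M.updateRow (ρ i) x).submatrix ρ κ = (M.submatrix ρ κ).updateRow i (x ∘ κ) := by
  ext i' j
  obtain rfl | hi := eq_or_ne i' i
  · simp
  · simp [hi, hρ.ne hi]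

section DesnanotJacobi

variable {n : ℕ}

theorem det_updateRow_zero_single {m : ℕ} (M : Matrix (Fin (m + 1)) (Fin (m + 1)) R) :
    (M.updateRow 0 (Pi.single 0 1)).det = (M.submatrix Fin.succ Fin.succ).det := by
  rw [det_succ_row_zero, Fintype.sum_eq_single 0 fun j hj => by simp [hj]]
  simp [← Fin.succAbove_zero]

theorem det_updateRow_zero_single_updateRow_one_single
    (M : Matrix (Fin (n + 2)) (Fin (n + 2)) R) :
    ((M.updateRow 0 (Pi.single 0 1)).updateRow 1 (Pi.single 1 1)).det =
      (M.submatrix (fun p : Fin n => p.succ.succ) (fun q : Fin n => q.succ.succ)).det := by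
  have hsingle : (Pi.single 1 1 : Fin (n + 2) → R) ∘ Fin.succ = Pi.single 0 1 := by
    rw [← Fin.succ_zero_eq_one]
    exact Function.update_comp_eq_of_injective _ (Fin.succ_injective _) _ _
  rw [updateRow_comm _ zero_ne_one, det_updateRow_zero_single, ← Fin.succ_zero_eq_one,
    submatrix_updateRow_of_injective _ (Fin.succ_injective _), Fin.succ_zero_eq_one, hsingle,
    det_updateRow_zero_single, submatrix_submatrix]
  rfl

theorem det_one_updateRow_zero_updateRow_one (x y : Fin (n + 2) → R) :
    (((1 : Matrix (Fin (n + 2)) (Fin (n + 2)) R).updateRow 0 x).updateRow 1 y).det =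
      x 0 * y 1 - x 1 * y 0 := by
  induction n with
  | zero => simp [det_fin_two]
  | succ n ih =>
    rw [det_succ_row _ (Fin.last _), Fintype.sum_eq_single (Fin.last _) fun j hj => by
      simp [updateRow_apply, hj.symm, Fin.ext_iff]]
    have h0 : (0 : Fin (n + 3)) = Fin.castSucc 0 := rfl
    have h1 : (1 : Fin (n + 3)) = Fin.castSucc 1 := rfl
    rw [Fin.succAbove_last, h1, submatrix_updateRow_of_injective _ (Fin.castSucc_injective _),
      h0, submatrix_updateRow_of_injective _ (Fin.castSucc_injective _),
      submatrix_one _ (Fin.castSucc_injective _), ih]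
    simp [updateRow_apply, Fin.ext_iff]

theorem det_mul_det_mul_det_submatrix_succ_succ (M : Matrix (Fin (n + 2)) (Fin (n + 2)) R) :
    M.det * (M.det *
        (M.submatrix (fun p : Fin n => p.succ.succ) (fun q : Fin n => q.succ.succ)).det)
      = M.det * ((M.submatrix (0 : Fin (n + 2)).succAbove (0 : Fin (n + 2)).succAbove).det *
            (M.submatrix (1 : Fin (n + 2)).succAbove (1 : Fin (n + 2)).succAbove).det
          - (M.submatrix (0 : Fin (n + 2)).succAbove (1 : Fin (n + 2)).succAbove).det *
            (M.submatrix (1 : Fin (n + 2)).succAbove (0 : Fin (n + 2)).succAbove).det) := by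
  set P := ((1 : Matrix (Fin (n + 2)) (Fin (n + 2)) R).updateRow 0 (M.adjugate 0)).updateRow 1
    (M.adjugate 1)
  have hrow (i : Fin (n + 2)) : M.adjugate i ᵥ* M = M.det • Pi.single i 1 := by
    rw [← mul_apply_eq_vecMul, adjugate_mul]
    ext j
    simp [one_eq_pi_single]
  have hPM : P * M =
      (M.updateRow 0 (M.det • Pi.single 0 1)).updateRow 1 (M.det • Pi.single 1 1) := by
    rw [updateRow_mul, updateRow_mul, one_mul, hrow, hrow]
  calc M.det * (M.det *
        (M.submatrix (fun p : Fin n => p.succ.succ) (fun q : Fin n => q.succ.succ)).det)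
      = (P * M).det := by
        rw [hPM, det_updateRow_smul, updateRow_comm _ zero_ne_one, det_updateRow_smul,
          updateRow_comm _ one_ne_zero, det_updateRow_zero_single_updateRow_one_single]
    _ = M.det * P.det := by rw [det_mul, mul_comm]
    _ = _ := by
        rw [det_one_updateRow_zero_updateRow_one]
        simp [adjugate_fin_succ_eq_det_submatrix]
        ring

theorem det_mul_det_submatrix_succ_succ (M : Matrix (Fin (n + 2)) (Fin (n + 2)) R) :
    M.det * (M.submatrix (fun p : Fin n => p.succ.succ) (fun q : Fin n => q.succ.succ)).det
      = (M.submatrix (0 : Fin (n + 2)).succAbove (0 : Fin (n + 2)).succAbove).det *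
            (M.submatrix (1 : Fin (n + 2)).succAbove (1 : Fin (n + 2)).succAbove).det
          - (M.submatrix (0 : Fin (n + 2)).succAbove (1 : Fin (n + 2)).succAbove).det *
            (M.submatrix (1 : Fin (n + 2)).succAbove (0 : Fin (n + 2)).succAbove).det := by
  have hX := mul_left_cancel₀ (det_mvPolynomialX_ne_zero _ ℤ)
    (det_mul_det_mul_det_submatrix_succ_succ (mvPolynomialX (Fin (n + 2)) (Fin (n + 2)) ℤ))
  have := congrArg (MvPolynomial.aeval fun p => M p.1 p.2) hX
  simp only [map_mul, map_sub, AlgHom.map_det, AlgHom.mapMatrix_apply, ← submatrix_map] at this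
  simpa only [← AlgHom.mapMatrix_apply, mvPolynomialX_mapMatrix_aeval] using this

end DesnanotJacobi

section RowAdditivity

variable {l m : Type*} [DecidableEq m]

theorem det_updateRow_self_add [Fintype m] (M : Matrix m m R) (i : m) (w : m → R) :
    (M.updateRow i (M i + w)).det = M.det + (M.updateRow i w).det := by
  rw [det_updateRow_add, updateRow_eq_self]

theorem det_updateRow_self_add_updateRow_self_add [Fintype m] (M : Matrix m m R) {i j : m}
    (hij : i ≠ j) (w : m → R) :
    ((M.updateRow i (M i + w)).updateRow j (M j + w)).det
      = M.det + (M.updateRow i w).det + (M.updateRow j w).det := by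
  have hj : M.updateRow i (M i + w) j = M j := updateRow_ne hij.symm
  have hi : M.updateRow j w i = M i := updateRow_ne hij
  have hww : ((M.updateRow j w).updateRow i w).det = 0 :=
    det_zero_of_row_eq hij (by rw [updateRow_self, updateRow_ne hij.symm, updateRow_self])
  rw [det_updateRow_add, ← hj, updateRow_eq_self, det_updateRow_self_add,
    updateRow_comm _ hij, det_updateRow_add, ← hi, updateRow_eq_self, hww]
  ring

variable [Fintype l] [DecidableEq l]

theorem det_submatrix_updateRow_self_add (M : Matrix m m R) {ρ : l → m}
    (hρ : Function.Injective ρ) (κ : l → m) {i : m} (hi : i ∈ Set.range ρ) (w : m → R) :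
    ((M.updateRow i (M i + w)).submatrix ρ κ).det
      = (M.submatrix ρ κ).det + ((M.updateRow i w).submatrix ρ κ).det := by
  obtain ⟨i, rfl⟩ := hi
  simp only [submatrix_updateRow_of_injective _ hρ]
  exact det_updateRow_self_add (M.submatrix ρ κ) i (w ∘ κ)

theorem det_submatrix_updateRow_self_add_updateRow_self_add (M : Matrix m m R) {ρ : l → m}
    (hρ : Function.Injective ρ) (κ : l → m) {i j : m} (hi : i ∈ Set.range ρ)
    (hj : j ∈ Set.range ρ) (hij : i ≠ j) (w : m → R) :
    (((M.updateRow i (M i + w)).updateRow j (M j + w)).submatrix ρ κ).det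
      = (M.submatrix ρ κ).det + ((M.updateRow i w).submatrix ρ κ).det
        + ((M.updateRow j w).submatrix ρ κ).det := by
  obtain ⟨i, rfl⟩ := hi
  obtain ⟨j, rfl⟩ := hj
  simp only [submatrix_updateRow_of_injective _ hρ]
  exact det_updateRow_self_add_updateRow_self_add (M.submatrix ρ κ) (ne_of_apply_ne ρ hij)
    (w ∘ κ)

end RowAdditivity

end Matrix

theorem Fin.mem_range_succ_succ_and_succAbove_of_two_le {n : ℕ} {x : Fin (n + 2)}
    (hx : 2 ≤ x.val) :
    x ∈ Set.range (fun p : Fin n => p.succ.succ) ∧ x ∈ Set.range (0 : Fin (n + 2)).succAbove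
      ∧ x ∈ Set.range (1 : Fin (n + 2)).succAbove := by
  refine ⟨⟨⟨x - 2, by omega⟩, Fin.ext (by simp; omega)⟩, ?_, ?_⟩ <;>
    rw [Fin.range_succAbove, Set.mem_compl_singleton_iff, Ne, Fin.ext_iff] <;>
    simp only [Fin.val_zero, Fin.val_one] <;> omega

/-- Second-derivative consequence of Sylvester's identity: for `B = A.updateRow r v`
and `C = A.updateRow s v` with `r ≠ s` both distinct from `0` and `1`,
`det B * det C_{0,1|0,1} + det C * det B_{0,1|0,1}
  = det B_{0|0} * det C_{1|1} + det C_{0|0} * det B_{1|1}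
    - det B_{0|1} * det C_{1|0} - det C_{0|1} * det B_{1|0}`. -/
theorem sylvester_second_derivative {R : Type*} [CommRing R] (n : ℕ)
    (A : Matrix (Fin (n + 2)) (Fin (n + 2)) R) (v : Fin (n + 2) → R)
    (r s : Fin (n + 2)) (hrs : r ≠ s) (hr : 2 ≤ r.val) (hs : 2 ≤ s.val)
    (B C : Matrix (Fin (n + 2)) (Fin (n + 2)) R)
    (hB : B = A.updateRow r v) (hC : C = A.updateRow s v) :
    B.det * (C.submatrix (fun p : Fin n => p.succ.succ) (fun q : Fin n => q.succ.succ)).det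
      + C.det * (B.submatrix (fun p : Fin n => p.succ.succ) (fun q : Fin n => q.succ.succ)).det
    = (B.submatrix (0 : Fin (n + 2)).succAbove (0 : Fin (n + 2)).succAbove).det *
        (C.submatrix (1 : Fin (n + 2)).succAbove (1 : Fin (n + 2)).succAbove).det
      + (C.submatrix (0 : Fin (n + 2)).succAbove (0 : Fin (n + 2)).succAbove).det *
        (B.submatrix (1 : Fin (n + 2)).succAbove (1 : Fin (n + 2)).succAbove).det
      - (B.submatrix (0 : Fin (n + 2)).succAbove (1 : Fin (n + 2)).succAbove).det *
        (C.submatrix (1 : Fin (n + 2)).succAbove (0 : Fin (n + 2)).succAbove).det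
      - (C.submatrix (0 : Fin (n + 2)).succAbove (1 : Fin (n + 2)).succAbove).det *
        (B.submatrix (1 : Fin (n + 2)).succAbove (0 : Fin (n + 2)).succAbove).det := by
  subst hB hC
  obtain ⟨hr₂, hr₀, hr₁⟩ := Fin.mem_range_succ_succ_and_succAbove_of_two_le hr
  obtain ⟨hs₂, hs₀, hs₁⟩ := Fin.mem_range_succ_succ_and_succAbove_of_two_le hs
  have hinj₂ : Function.Injective (fun p : Fin n => p.succ.succ) :=
    (Fin.succ_injective _).comp (Fin.succ_injective _)
  have hG := det_mul_det_submatrix_succ_succ ((A.updateRow r (A r + v)).updateRow s (A s + v))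
  have hR := det_mul_det_submatrix_succ_succ (A.updateRow r (A r + v))
  have hS := det_mul_det_submatrix_succ_succ (A.updateRow s (A s + v))
  have hA := det_mul_det_submatrix_succ_succ A
  simp only [det_updateRow_self_add_updateRow_self_add _ hrs, det_updateRow_self_add,
    det_submatrix_updateRow_self_add_updateRow_self_add _ Fin.succAbove_right_injective _ _ _ hrs,
    det_submatrix_updateRow_self_add_updateRow_self_add _ hinj₂ _ _ _ hrs,
    det_submatrix_updateRow_self_add _ Fin.succAbove_right_injective,
    det_submatrix_updateRow_self_add _ hinj₂, hr₀, hr₁, hr₂, hs₀, hs₁, hs₂] at hG hR hS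
  linear_combination hG - hR - hS + hA
end
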